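/- arXiv:2401.02380 — 7 statements merged into one kernel-verified Lean document; each statement's English description precedes it below -/
import Mathlib

section
/- Let A be a nontrivial additive commutative group and let s, u, p be natural numbers with 1 ≤ u ≤ s and ⌊s/u⌋ ≤ p. Then there exists a claimed-values table W : Fin (s+u) → Fin p → A such that for every finite set I ⊆ Fin p with |I| < ⌊s/u⌋ there exist functions g¹, g² : Fin p → A and sets M¹, M² ⊆ Fin (s+u) with |M¹| ≤ s and |M²| ≤ s such that W is consistent with (g¹, M¹) and with (g², M²), g¹ i = g² i for every i ∈ I, and ∑_{i ∈ Fin p} g¹ i ≠ ∑_{i ∈ Fin p} g² i. (Existence of the symmetrization attack: whenever fewer than ⌊s/u⌋ partial gradients are computed locally, two worlds with at most s malicious workers each are indistinguishable from all claimed values and all locally computed values, yet have different full gradients.) -/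
theorem aux_card_ge (s u t : ℕ) (hu : 1 ≤ u) (P : ℕ → Prop) [DecidablePred P]
    (base : ℕ) (hb : base + u ≤ s + u) (hP : ∀ i < u, P (base + i)) :
    u ≤ (Finset.filter (fun j : Fin (s+u) => P (j : ℕ)) Finset.univ).card := by
  have : Function.Injective (fun i : Fin u => (⟨base + i, lt_of_lt_of_le (by omega) hb⟩ : Fin (s+u))) := by
    intro a b hab
    simp only [Fin.mk.injEq] at hab
    exact Fin.ext (by omega)
  calc u = (Finset.univ.image (fun i : Fin u => (⟨base + i, lt_of_lt_of_le (by omega) hb⟩ : Fin (s+u)))).card := by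
            rw [Finset.card_image_of_injective _ this, Finset.card_univ, Fintype.card_fin]
    _ ≤ _ := by
      apply Finset.card_le_card
      intro j hj
      simp only [Finset.mem_image] at hj
      obtain ⟨i, _, rfl⟩ := hj
      simp only [Finset.mem_filter, Finset.mem_univ, true_and]
      exact hP i i.2

/-- Existence of the symmetrization attack: whenever fewer than ⌊s/u⌋ partial
gradients are computed locally, two worlds with at most `s` malicious workers
each are indistinguishable from all claimed values and all locally computed
values, yet have different full gradients. -/
theorem symmetrization_attack_exists
    (A : Type*) [AddCommGroup A] [Nontrivial A]
    (s u p : ℕ) (hu : 1 ≤ u) (hus : u ≤ s) (hp : s / u ≤ p) :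
    ∃ W : Fin (s + u) → Fin p → A,
      ∀ I : Finset (Fin p), I.card < s / u →
        ∃ (g₁ g₂ : Fin p → A) (M₁ M₂ : Finset (Fin (s + u))),
          M₁.card ≤ s ∧ M₂.card ≤ s ∧
          (∀ j ∉ M₁, ∀ i, W j i = g₁ i) ∧
          (∀ j ∉ M₂, ∀ i, W j i = g₂ i) ∧
          (∀ i ∈ I, g₁ i = g₂ i) ∧
          ∑ i, g₁ i ≠ ∑ i, g₂ i := by
  obtain ⟨a, ha⟩ := exists_ne (0 : A)
  set t := s / u with ht
  have htu : t * u ≤ s := Nat.div_mul_le_self s u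
  refine ⟨fun j i => if (i : ℕ) = (j : ℕ) / u ∧ (j : ℕ) / u < t then a else 0, ?_⟩
  intro I hI
  -- find k < t with index k not in I
  have : ¬ (Finset.univ.image (fun k : Fin t => (⟨k.1, lt_of_lt_of_le k.2 hp⟩ : Fin p)) ⊆ I) := by
    intro hsub
    have hinj : Function.Injective (fun k : Fin t => (⟨k.1, lt_of_lt_of_le k.2 hp⟩ : Fin p)) := by
      intro a b hab; simp only [Fin.mk.injEq] at hab; exact Fin.ext hab
    have := Finset.card_le_card hsub
    rw [Finset.card_image_of_injective _ hinj, Finset.card_univ, Fintype.card_fin] at this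
    omega
  obtain ⟨x, hxmem, hxI⟩ := Finset.not_subset.mp this
  simp only [Finset.mem_image, Finset.mem_univ, true_and] at hxmem
  obtain ⟨k, rfl⟩ := hxmem
  have hkt : (k : ℕ) < t := k.2
  have hkp : (k : ℕ) < p := lt_of_lt_of_le hkt hp
  refine ⟨fun _ => 0, fun i => if (i : ℕ) = (k : ℕ) then a else 0,
    (Finset.filter (fun j : Fin (s+u) => t ≤ (j : ℕ) / u) Finset.univ)ᶜ,
    (Finset.filter (fun j : Fin (s+u) => (j : ℕ) / u = (k : ℕ)) Finset.univ)ᶜ,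
    ?_, ?_, ?_, ?_, ?_, ?_⟩
  · rw [Finset.card_compl, Fintype.card_fin]
    have := aux_card_ge s u t hu (fun n => t ≤ n / u) (t * u) (by omega)
      (fun i hi => by
        show t ≤ (t * u + i) / u
        rw [Nat.le_div_iff_mul_le hu]; omega)
    beta_reduce at this
    omega
  · rw [Finset.card_compl, Fintype.card_fin]
    have hk1 : (k : ℕ) + 1 ≤ t := hkt
    have := aux_card_ge s u t hu (fun n => n / u = (k : ℕ)) (u * (k : ℕ)) (by nlinarith)
      (fun i hi => by
        show (u * (k : ℕ) + i) / u = (k : ℕ)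
        rw [Nat.mul_add_div hu, Nat.div_eq_of_lt hi]; omega)
    beta_reduce at this
    omega
  · intro j hj i
    simp only [Finset.mem_compl, Finset.mem_filter, Finset.mem_univ, true_and, not_le] at hj
    push_neg at hj
    simp only [ite_eq_right_iff, and_imp]
    intro _ h2; omega
  · intro j hj i
    simp only [Finset.mem_compl, Finset.mem_filter, Finset.mem_univ, true_and, not_not] at hj
    simp [hj, hkt]
  · intro i hi
    have : (i : ℕ) ≠ (k : ℕ) := fun h => hxI (by rwa [show (⟨(k:ℕ), hkp⟩ : Fin p) = i from Fin.ext h.symm])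
    simp [this]
  · have h2 : ∑ i : Fin p, (if (i : ℕ) = (k : ℕ) then a else 0) = a := by
      calc ∑ i : Fin p, (if (i : ℕ) = (k : ℕ) then a else 0)
          = ∑ i : Fin p, (if i = (⟨(k:ℕ), hkp⟩ : Fin p) then a else 0) :=
            Finset.sum_congr rfl (fun i _ => by simp [Fin.ext_iff])
        _ = a := by simp
    simpa [h2] using (Ne.symm ha)
end

section
/- Let A be a nontrivial additive commutative group and let s, u, p be natural numbers with 1 ≤ u ≤ s and ⌊s/u⌋ ≤ p. Let σ : (Fin (s+u) → Fin p → A) → Finset (Fin p) be any selection rule satisfying |σ W| < ⌊s/u⌋ for every table W, and let dec : (Fin (s+u) → Fin p → A) → (Fin p → A) → A be any decoding rule such that dec W g = dec W g' whenever g and g' agree on σ W (i.e., the decoder depends on the true gradients only through the locally computed ones). Then there exist a table W, a function g : Fin p → A, and a set M ⊆ Fin (s+u) with |M| ≤ s such that W is consistent with (g, M) and dec W g ≠ ∑_{i ∈ Fin p} g i. (Converse of Theorem 1: for a fractional repetition group of s+u workers, any scheme performing fewer than ⌊s/u⌋ local gradient computations fails to recover the full gradient against some choice of at most s malicious workers.)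 -/
/-- Converse of Theorem 1: for a fractional repetition group of `s+u` workers,
any scheme performing fewer than ⌊s/u⌋ local gradient computations fails to
recover the full gradient against some choice of at most `s` malicious workers. -/
theorem converse_local_computations
    (A : Type*) [AddCommGroup A] [Nontrivial A]
    (s u p : ℕ) (hu : 1 ≤ u) (hus : u ≤ s) (hp : s / u ≤ p)
    (σ : (Fin (s + u) → Fin p → A) → Finset (Fin p))
    (hσ : ∀ W, (σ W).card < s / u)
    (dec : (Fin (s + u) → Fin p → A) → (Fin p → A) → A)
    (hdec : ∀ W g g', (∀ i ∈ σ W, g i = g' i) → dec W g = dec W g') :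
    ∃ (W : Fin (s + u) → Fin p → A) (g : Fin p → A) (M : Finset (Fin (s + u))),
      M.card ≤ s ∧
      (∀ j ∉ M, ∀ i, W j i = g i) ∧
      dec W g ≠ ∑ i, g i := by
  obtain ⟨a, ha⟩ := exists_ne (0 : A)
  set t := s / u with ht
  have htu : t * u ≤ s := Nat.div_mul_le_self s u
  set G : ℕ → Fin p → A := fun m i => if i.val < m then a else 0 with hG
  set W : Fin (s + u) → Fin p → A := fun j => G (min (j.val / u) t) with hW
  have hM : ∀ m ≤ t, (Finset.univ.filter
      (fun j : Fin (s + u) => ¬ (min (j.val / u) t = m))).card ≤ s := by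
    intro m hm
    have hmm : u * m ≤ u * t := Nat.mul_le_mul_left u hm
    have hut : u * t = t * u := Nat.mul_comm u t
    have hlt : ∀ k : Fin u, u * m + k.val < s + u := by
      intro k; have := k.isLt; omega
    have hinj : ∀ k : Fin u, (⟨u * m + k.val, hlt k⟩ : Fin (s+u)) ∈
        Finset.univ.filter (fun j : Fin (s + u) => min (j.val / u) t = m) := by
      intro k
      simp only [Finset.mem_filter, Finset.mem_univ, true_and]
      have hdiv : (u * m + k.val) / u = m := by
        rw [Nat.mul_add_div (by omega)]
        simp [Nat.div_eq_of_lt k.isLt]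
      rw [hdiv]
      omega
    have hcard : u ≤ (Finset.univ.filter
        (fun j : Fin (s + u) => min (j.val / u) t = m)).card := by
      have := Finset.card_le_card_of_injOn (s := (Finset.univ : Finset (Fin u)))
        (t := Finset.univ.filter (fun j : Fin (s + u) => min (j.val / u) t = m))
        (fun k : Fin u => (⟨u * m + k.val, hlt k⟩ : Fin (s+u)))
        (fun k _ => hinj k)
        (fun x _ y _ hxy => by
          simp only [Fin.mk.injEq] at hxy
          exact Fin.ext (by omega))
      simpa using this
    have := Finset.card_filter_add_card_filter_not
      (s := (Finset.univ : Finset (Fin (s+u))))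
      (p := fun j : Fin (s + u) => min (j.val / u) t = m)
    simp only [Finset.card_univ, Fintype.card_fin] at this
    omega
  have hex : ∃ m : ℕ, ∃ hmt : m < t, (⟨m, by omega⟩ : Fin p) ∉ σ W := by
    by_contra hc
    push_neg at hc
    have hsub : (Finset.univ.filter (fun i : Fin p => i.val < t)) ⊆ σ W := by
      intro i hi
      simp only [Finset.mem_filter] at hi
      have := hc i.val hi.2
      simpa using this
    have h1 : (Finset.univ.filter (fun i : Fin p => i.val < t)).card = t := by
      have heq : Finset.univ.filter (fun i : Fin p => i.val < t)
          = (Finset.range t).attachFin (fun n hn => by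
              have := Finset.mem_range.mp hn; omega) := by
        ext i
        simp [Finset.mem_attachFin]
      rw [heq, Finset.card_attachFin, Finset.card_range]
    have := Finset.card_le_card hsub
    have := hσ W
    omega
  obtain ⟨m, hmt, hnot⟩ := hex
  have hagree : dec W (G m) = dec W (G (m+1)) := by
    apply hdec
    intro i hi
    have hne : i ≠ (⟨m, by omega⟩ : Fin p) := fun h => hnot (h ▸ hi)
    have hvne : i.val ≠ m := fun h => hne (Fin.ext h)
    simp only [hG]
    by_cases h : i.val < m
    · rw [if_pos h, if_pos (by omega)]
    · rw [if_neg h, if_neg (by omega)]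
  have hsum : (∑ i, G (m+1) i) = (∑ i, G m i) + a := by
    have key : ∀ i : Fin p,
        G (m+1) i = G m i + (if i = (⟨m, by omega⟩ : Fin p) then a else 0) := by
      intro i
      simp only [hG]
      by_cases h : i.val < m
      · rw [if_pos (by omega), if_pos h, if_neg (by
          intro hh; rw [hh] at h; simp at h), add_zero]
      · by_cases h2 : i.val = m
        · rw [if_pos (by omega), if_neg h, if_pos (Fin.ext h2), zero_add]
        · rw [if_neg (by omega), if_neg h, if_neg (by
            intro hh; rw [hh] at h2; simp at h2), add_zero]
    rw [Finset.sum_congr rfl (fun i _ => key i), Finset.sum_add_distrib,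
      Finset.sum_ite_eq' Finset.univ (⟨m, by omega⟩ : Fin p) (fun _ => a)]
    simp
  by_cases hd : dec W (G m) = ∑ i, G m i
  · refine ⟨W, G (m+1), Finset.univ.filter
      (fun j : Fin (s + u) => ¬ (min (j.val / u) t = (m+1))), hM (m+1) (by omega), ?_, ?_⟩
    · intro j hj i
      simp only [Finset.mem_filter, Finset.mem_univ, true_and, not_not] at hj
      simp [hW, hj]
    · rw [← hagree, hd, hsum]
      exact fun h => ha (left_eq_add.mp h)
  · refine ⟨W, G m, Finset.univ.filter
      (fun j : Fin (s + u) => ¬ (min (j.val / u) t = m)), hM m (by omega), ?_, hd⟩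
    intro j hj i
    simp only [Finset.mem_filter, Finset.mem_univ, true_and, not_not] at hj
    simp [hW, hj]
end

section
/- Let A be a nontrivial additive commutative group and let s, u, p be natural numbers with 1 ≤ u ≤ s and ⌊s/u⌋ ≤ p. Then there exist a claimed-values table W : Fin (s+u) → Fin p → A and a set Ĩ ⊆ Fin p with |Ĩ| = ⌊s/u⌋ such that for every index ĩ ∈ Ĩ and every finite set I ⊆ Fin p with ĩ ∉ I, there exist g¹, g² : Fin p → A and M¹, M² ⊆ Fin (s+u) with |M¹| ≤ s and |M²| ≤ s, such that W is consistent with (g¹, M¹) and with (g², M²), g¹ i = g² i for every i ≠ ĩ (in particular for every i ∈ I), and g¹ ĩ ≠ g² ĩ, hence ∑_{i} g¹ i ≠ ∑_{i} g² i. (Computation of disagreement gradients: under the symmetrization attack, any list of locally computed gradients that omits some disagreement index leaves two worlds with different full gradients indistinguishable; thus the locally computed list must contain all of Ĩ.) -/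
/-- Computation of disagreement gradients: under the symmetrization attack, any
list of locally computed gradients that omits some disagreement index leaves
two worlds with different full gradients indistinguishable; thus the locally
computed list must contain all of the disagreement set `Itil`. -/
theorem disagreement_gradients_must_be_computed
    (A : Type*) [AddCommGroup A] [Nontrivial A]
    (s u p : ℕ) (hu : 1 ≤ u) (hus : u ≤ s) (hp : s / u ≤ p) :
    ∃ (W : Fin (s + u) → Fin p → A) (Itil : Finset (Fin p)),
      Itil.card = s / u ∧
      ∀ itil ∈ Itil, ∀ I : Finset (Fin p), itil ∉ I →
        ∃ (g₁ g₂ : Fin p → A) (M₁ M₂ : Finset (Fin (s + u))),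
          M₁.card ≤ s ∧ M₂.card ≤ s ∧
          (∀ j ∉ M₁, ∀ i, W j i = g₁ i) ∧
          (∀ j ∉ M₂, ∀ i, W j i = g₂ i) ∧
          (∀ i, i ≠ itil → g₁ i = g₂ i) ∧
          g₁ itil ≠ g₂ itil ∧
          ∑ i, g₁ i ≠ ∑ i, g₂ i := by
  obtain ⟨x, hx⟩ := exists_ne (0 : A)
  set t := s / u with ht
  have hupos : 0 < u := hu
  have htu : t * u ≤ s := Nat.div_mul_le_self s u
  -- the claimed-values table: group `j/u` lies at index `j/u` (for j/u < t)
  refine ⟨fun j i => if i.val < t ∧ j.val / u = i.val then x else 0,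
    Finset.univ.map (Fin.castLEEmb hp), by simp, ?_⟩
  intro itil hitil I hI
  have hk : itil.val < t := by
    simp only [Finset.mem_map, Finset.mem_univ, Fin.castLEEmb_apply, true_and] at hitil
    obtain ⟨k, hk⟩ := hitil
    rw [← hk]; exact k.isLt
  have hbd : itil.val * u + u ≤ s := by
    have h1 : (itil.val + 1) * u ≤ t * u := Nat.mul_le_mul_right u hk
    rw [Nat.succ_mul] at h1; omega
  -- characterization of j/u = itil.val
  have hdiv : ∀ j : ℕ, j / u = itil.val ↔ itil.val * u ≤ j ∧ j < itil.val * u + u := by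
    intro j
    constructor
    · intro h
      have h1 := Nat.div_add_mod j u
      have h2 := Nat.mod_lt j hupos
      rw [h] at h1
      rw [Nat.mul_comm] at h1
      omega
    · intro ⟨h1, h2⟩
      exact Nat.div_eq_of_lt_le h1 (by rw [Nat.succ_mul]; omega)
  have hgrp : (Finset.univ.filter (fun j : Fin (s+u) => j.val / u = itil.val)).card = u := by
    have key : (Finset.univ.filter (fun j : Fin (s+u) => j.val / u = itil.val)).card
        = (Finset.univ : Finset (Fin u)).card := by
      refine Finset.card_bij' (fun j _ => (⟨j.val % u, Nat.mod_lt _ hupos⟩ : Fin u))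
        (fun m _ => (⟨itil.val * u + m.val, by have := m.isLt; omega⟩ : Fin (s+u)))
        (fun j hj => Finset.mem_univ _) ?_ ?_ ?_
      · intro m hm
        simp only [Finset.mem_filter, Finset.mem_univ, true_and]
        exact (hdiv _).mpr ⟨by omega, by have := m.isLt; omega⟩
      · intro j hj
        simp only [Finset.mem_filter, Finset.mem_univ, true_and] at hj
        have h1 := Nat.div_add_mod j.val u
        rw [hj, Nat.mul_comm] at h1
        ext
        simpa using h1
      · intro m hm
        ext
        show (↑itil * u + ↑m) % u = ↑m
        rw [Nat.add_comm, Nat.add_mul_mod_self_right, Nat.mod_eq_of_lt m.isLt]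
    simpa using key
  refine ⟨0, fun i => if i = itil then x else 0,
    Finset.univ.filter (fun j : Fin (s+u) => j.val < t * u),
    Finset.univ.filter (fun j : Fin (s+u) => ¬ j.val / u = itil.val), ?_, ?_, ?_, ?_, ?_, ?_, ?_⟩
  · -- card M₁ ≤ s
    calc (Finset.univ.filter (fun j : Fin (s+u) => j.val < t * u)).card
        ≤ ((Finset.univ : Finset (Fin (t*u))).map
            (Fin.castLEEmb (by omega : t * u ≤ s + u))).card := by
          apply Finset.card_le_card
          intro j hj
          simp only [Finset.mem_filter, Finset.mem_univ, true_and] at hj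
          simp only [Finset.mem_map, Finset.mem_univ, Fin.castLEEmb_apply, true_and]
          exact ⟨⟨j.val, hj⟩, rfl⟩
      _ = t * u := by simp
      _ ≤ s := htu
  · -- card M₂ ≤ s
    have hsum := Finset.card_filter_add_card_filter_not
      (s := (Finset.univ : Finset (Fin (s+u)))) (p := fun j => j.val / u = itil.val)
    rw [Finset.card_univ, Fintype.card_fin, hgrp] at hsum
    omega
  · -- consistency with g₁ = 0
    intro j hj i
    simp only [Finset.mem_filter, Finset.mem_univ, true_and, not_lt] at hj
    show (if i.val < t ∧ j.val / u = i.val then x else 0) = 0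
    rw [if_neg]
    rintro ⟨h1, h2⟩
    have : j.val / u < t := h2 ▸ h1
    rw [Nat.div_lt_iff_lt_mul hupos] at this
    omega
  · -- consistency with g₂
    intro j hj i
    simp only [Finset.mem_filter, Finset.mem_univ, true_and, not_not] at hj
    show (if i.val < t ∧ j.val / u = i.val then x else 0) = (if i = itil then x else 0)
    by_cases hi : i = itil
    · subst hi
      rw [if_pos ⟨hk, hj⟩, if_pos rfl]
    · rw [if_neg, if_neg hi]
      rintro ⟨h1, h2⟩
      exact hi (Fin.ext (by omega))
  · intro i hi; simp [hi]
  · simp [Ne.symm hx]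
  · simp [Finset.sum_ite_eq', Ne.symm hx]
end

section
/- Let A be a nontrivial additive commutative group and let s, u, u', p be natural numbers with 0 ≤ u' < u, 1 ≤ u − u' ≤ s, and ⌊s/(u−u')⌋ ≤ p. Then there exists a claimed-values table W : Fin (s + u − u') → Fin p → A on the s + u − u' responding workers such that for every finite set I ⊆ Fin p with |I| < ⌊s/(u−u')⌋ there exist g¹, g² : Fin p → A and M¹, M² ⊆ Fin (s+u−u') with |M¹| ≤ s and |M²| ≤ s such that W is consistent with (g¹, M¹) and with (g², M²), g¹ i = g² i for every i ∈ I, and ∑_i g¹ i ≠ ∑_i g² i. (Straggler extension of the converse: with u' straggling honest workers in a group of s+u workers, at least ⌊s/(u−u')⌋ local computations are needed.) -/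
/-!
Split the first `t * q` workers, `t = ⌊s/q⌋`, `q = u - u'`, into `t` blocks of `q`, and let the
workers of block `k` claim the value `a ≠ 0` for the `k`-th partial gradient and `0` for every
other one, while all remaining workers claim `0` throughout. If the `k`-th gradient is never
computed locally (`k ∉ I`, possible since `|I| < t`), this table is consistent both with the
gradient `0`, the `t * q ≤ s` block workers being malicious, and with the gradient `Pi.single k a`,
everyone outside block `k`, that is `s` workers, being malicious. The two gradients agree on `I`
but their sums are `0 ≠ a`.
-/

open Finset

theorem Fin.card_filter_val_div_eq {n q k : ℕ} (hq : 0 < q) (hk : (k + 1) * q ≤ n) :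
    #{j : Fin n | (j : ℕ) / q = k} = q := by
  have hle : k * q ≤ (k + 1) * q := Nat.mul_le_mul_right q k.le_succ
  have hblock : ({j | (j : ℕ) / q = k} : Finset (Fin n)) =
      ({j | (j : ℕ) < (k + 1) * q} : Finset (Fin n)) \
        ({j | (j : ℕ) < k * q} : Finset (Fin n)) := by
    ext j
    simp only [mem_filter, mem_univ, true_and, mem_sdiff, ← Nat.div_lt_iff_lt_mul hq]
    omega
  rw [hblock, card_sdiff_of_subset, Fin.card_filter_val_lt, Fin.card_filter_val_lt,
    min_eq_right hk, min_eq_right (hle.trans hk), add_mul, one_mul, Nat.add_sub_cancel_left]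
  intro j
  simp only [mem_filter, mem_univ, true_and]
  exact fun hj => hj.trans_le hle

theorem Fin.card_filter_val_div_ne {n q k : ℕ} (hq : 0 < q) (hk : (k + 1) * q ≤ n) :
    #{j : Fin n | (j : ℕ) / q ≠ k} = n - q := by
  rw [filter_not, card_sdiff_of_subset (filter_subset _ _), Fin.card_filter_val_div_eq hq hk,
    card_univ, Fintype.card_fin]

theorem Fin.exists_val_lt_notMem_of_card_lt {p t : ℕ} {I : Finset (Fin p)} (ht : t ≤ p)
    (hI : #I < t) : ∃ k : Fin p, (k : ℕ) < t ∧ k ∉ I := by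
  have hcard : #I < #{k : Fin p | (k : ℕ) < t} := by
    rwa [Fin.card_filter_val_lt, min_eq_right ht]
  obtain ⟨k, hk, hkI⟩ := exists_mem_notMem_of_card_lt_card hcard
  exact ⟨k, (mem_filter.1 hk).2, hkI⟩

theorem exists_card_le_of_card_filter_ne_le {ι κ A : Type*} [Fintype ι] [DecidableEq (κ → A)]
    (W : ι → κ → A) (g : κ → A) {s : ℕ} (h : #{j | W j ≠ g} ≤ s) :
    ∃ M : Finset ι, #M ≤ s ∧ ∀ j ∉ M, ∀ i, W j i = g i :=
  ⟨_, h, fun j hj => congrFun (by simpa using hj)⟩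

def symmetrizationTable {A : Type*} [Zero A] {n p : ℕ} (a : A) (q t : ℕ) :
    Fin n → Fin p → A :=
  fun j i => if (i : ℕ) < t ∧ (j : ℕ) / q = i then a else 0

section SymmetrizationTable

variable {A : Type*} [Zero A] {n p q t : ℕ} (a : A)

theorem symmetrizationTable_of_le (hq : 0 < q) {j : Fin n} (hj : t * q ≤ j) :
    symmetrizationTable a q t j = (0 : Fin p → A) := by
  have htj : t ≤ (j : ℕ) / q := (Nat.le_div_iff_mul_le hq).2 hj
  funext i
  simp only [symmetrizationTable, Pi.zero_apply]
  exact if_neg fun h => by omega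

theorem symmetrizationTable_of_div_eq [DecidableEq (Fin p)] {k : Fin p} (hk : (k : ℕ) < t)
    {j : Fin n} (hj : (j : ℕ) / q = k) : symmetrizationTable a q t j = Pi.single k a := by
  funext i
  simp only [symmetrizationTable]
  by_cases hik : i = k
  · subst hik
    rw [Pi.single_eq_same, if_pos ⟨hk, hj⟩]
  · rw [Pi.single_eq_of_ne hik]
    exact if_neg fun h => hik (Fin.ext (h.2.symm.trans hj))

theorem card_symmetrizationTable_ne_zero_le [DecidableEq (Fin p → A)] (hq : 0 < q) :
    #{j : Fin n | symmetrizationTable a q t j ≠ (0 : Fin p → A)} ≤ t * q :=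
  calc #{j : Fin n | symmetrizationTable a q t j ≠ (0 : Fin p → A)}
      ≤ #{j : Fin n | (j : ℕ) < t * q} := by
        refine card_le_card fun j => ?_
        simp only [mem_filter, mem_univ, true_and]
        exact fun hj => not_le.1 fun hle => hj (symmetrizationTable_of_le a hq hle)
    _ ≤ t * q := by
        rw [Fin.card_filter_val_lt]
        exact min_le_right _ _

theorem card_symmetrizationTable_ne_single_le [DecidableEq (Fin p)] [DecidableEq (Fin p → A)]
    (hq : 0 < q) {k : Fin p} (hk : (k : ℕ) < t) (htn : t * q ≤ n) :
    #{j : Fin n | symmetrizationTable a q t j ≠ Pi.single k a} ≤ n - q :=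
  calc #{j : Fin n | symmetrizationTable a q t j ≠ Pi.single k a}
      ≤ #{j : Fin n | (j : ℕ) / q ≠ k} := by
        refine card_le_card fun j => ?_
        simp only [mem_filter, mem_univ, true_and]
        exact mt (symmetrizationTable_of_div_eq a hk)
    _ = n - q := Fin.card_filter_val_div_ne hq ((Nat.mul_le_mul_right q hk).trans htn)

end SymmetrizationTable

theorem symmetrization_attack_with_stragglers_general
    (A : Type*) [AddCommGroup A] [Nontrivial A]
    (s u u' p : ℕ) (hp : s / (u - u') ≤ p) :
    ∃ W : Fin (s + u - u') → Fin p → A,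
      ∀ I : Finset (Fin p), I.card < s / (u - u') →
        ∃ (g₁ g₂ : Fin p → A) (M₁ M₂ : Finset (Fin (s + u - u'))),
          M₁.card ≤ s ∧ M₂.card ≤ s ∧
          (∀ j ∉ M₁, ∀ i, W j i = g₁ i) ∧
          (∀ j ∉ M₂, ∀ i, W j i = g₂ i) ∧
          (∀ i ∈ I, g₁ i = g₂ i) ∧
          ∑ i, g₁ i ≠ ∑ i, g₂ i := by
  classical
  obtain ⟨a, ha⟩ := exists_ne (0 : A)
  refine ⟨symmetrizationTable a (u - u') (s / (u - u')), fun I hI => ?_⟩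
  -- `s / 0 = 0`, so `|I| < s / (u - u')` forces `u' < u`
  have hq : 0 < u - u' := (Nat.div_pos_iff.1 (I.card.zero_le.trans_lt hI)).1
  have hts : s / (u - u') * (u - u') ≤ s := Nat.div_mul_le_self s _
  have hns : s + u - u' - (u - u') ≤ s := by omega
  obtain ⟨k, hk, hkI⟩ := Fin.exists_val_lt_notMem_of_card_lt hp hI
  obtain ⟨M₁, hM₁, hW₁⟩ := exists_card_le_of_card_filter_ne_le _ 0
    ((card_symmetrizationTable_ne_zero_le a hq).trans hts)
  obtain ⟨M₂, hM₂, hW₂⟩ := exists_card_le_of_card_filter_ne_le _ (Pi.single k a)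
    ((card_symmetrizationTable_ne_single_le a hq hk (by omega)).trans hns)
  refine ⟨0, Pi.single k a, M₁, M₂, hM₁, hM₂, hW₁, hW₂, fun i hi => ?_, ?_⟩
  · rw [Pi.single_eq_of_ne (ne_of_mem_of_not_mem hi hkI)]
    rfl
  · simpa using ha.symm

/-- Straggler extension of the converse: with `u'` straggling honest workers in
a group of `s+u` workers, at least ⌊s/(u−u')⌋ local computations are needed. -/
theorem symmetrization_attack_with_stragglers
    (A : Type*) [AddCommGroup A] [Nontrivial A]
    (s u u' p : ℕ) (hu' : u' < u) (h1 : 1 ≤ u - u') (h2 : u - u' ≤ s)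
    (hp : s / (u - u') ≤ p) :
    ∃ W : Fin (s + u - u') → Fin p → A,
      ∀ I : Finset (Fin p), I.card < s / (u - u') →
        ∃ (g₁ g₂ : Fin p → A) (M₁ M₂ : Finset (Fin (s + u - u'))),
          M₁.card ≤ s ∧ M₂.card ≤ s ∧
          (∀ j ∉ M₁, ∀ i, W j i = g₁ i) ∧
          (∀ j ∉ M₂, ∀ i, W j i = g₂ i) ∧
          (∀ i ∈ I, g₁ i = g₂ i) ∧
          ∑ i, g₁ i ≠ ∑ i, g₂ i :=
  symmetrization_attack_with_stragglers_general A s u u' p hp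
end

section
/- Let A be an additive commutative group, let p ≥ 1, and let g, g' : Fin p → A satisfy ∑_{i ∈ Fin p} g i ≠ ∑_{i ∈ Fin p} g' i. Then there exist L ≤ clog₂ p and a chain of nonempty finite sets S₀ ⊇ S₁ ⊇ ⋯ ⊇ S_L of indices in Fin p with S₀ = Fin p (the full index set), |S_L| = 1, |S_{t+1}| ≤ ⌈|S_t| / 2⌉ for every t < L, and ∑_{i ∈ S_t} g i ≠ ∑_{i ∈ S_t} g' i for every t ≤ L. In particular, the unique element i* of S_L satisfies g i* ≠ g' i*. (Correctness of a match: descending the binary match tree halves the candidate set in each round and, after at most ⌈log₂ p⌉ rounds, identifies a single partial gradient on whose value the two workers disagree.) -/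
private lemma match_tree_aux
    (A : Type*) [AddCommGroup A] (p : ℕ) (g g' : Fin p → A) :
    ∀ n : ℕ, ∀ S : Finset (Fin p), S.card = n → S.Nonempty →
      (∑ i ∈ S, g i ≠ ∑ i ∈ S, g' i) →
      ∃ L : ℕ, L ≤ Nat.clog 2 n ∧
        ∃ f : ℕ → Finset (Fin p),
          f 0 = S ∧
          (f L).card = 1 ∧
          (∀ t ≤ L, (f t).Nonempty) ∧
          (∀ t < L, f (t + 1) ⊆ f t ∧ (f (t + 1)).card ≤ ((f t).card + 1) / 2) ∧
          (∀ t ≤ L, ∑ i ∈ f t, g i ≠ ∑ i ∈ f t, g' i) := by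
  intro n
  induction n using Nat.strong_induction_on with
  | _ n ih =>
    intro S hcard hne hsum
    rcases Nat.lt_or_ge n 2 with h2 | h2
    · -- n = 1
      have hn1 : n = 1 := by
        have := Finset.card_pos.mpr hne
        omega
      refine ⟨0, by simp, fun _ => S, rfl, by simpa [hcard] using hn1, ?_, by intro t ht; omega, ?_⟩
      · intro t ht; exact hne
      · intro t ht; exact hsum
    · -- n ≥ 2 : split S
      obtain ⟨T, hTS, hTcard⟩ := Finset.exists_subset_card_eq (s := S) (n := (n+1)/2) (by omega)
      have hsplit : ∑ i ∈ T, g i + ∑ i ∈ S \ T, g i = ∑ i ∈ S, g i := by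
        rw [add_comm]; exact Finset.sum_sdiff hTS
      have hsplit' : ∑ i ∈ T, g' i + ∑ i ∈ S \ T, g' i = ∑ i ∈ S, g' i := by
        rw [add_comm]; exact Finset.sum_sdiff hTS
      have hSdcard : (S \ T).card = n - (n+1)/2 := by
        rw [Finset.card_sdiff_of_subset hTS, hcard, hTcard]
      -- one of the halves disagrees
      have key : ∃ U : Finset (Fin p), U ⊆ S ∧ U.Nonempty ∧ U.card ≤ (n+1)/2 ∧
          ∑ i ∈ U, g i ≠ ∑ i ∈ U, g' i := by
        by_cases hT : ∑ i ∈ T, g i = ∑ i ∈ T, g' i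
        · refine ⟨S \ T, Finset.sdiff_subset, ?_, by omega, ?_⟩
          · rw [← Finset.card_pos, hSdcard]; omega
          · intro hD; apply hsum
            rw [← hsplit, ← hsplit', hT, hD]
        · refine ⟨T, hTS, ?_, by omega, hT⟩
          rw [← Finset.card_pos, hTcard]; omega
      obtain ⟨U, hUS, hUne, hUcard, hUsum⟩ := key
      obtain ⟨L, hL, f', hf0, hfL, hfne, hfstep, hfsum⟩ :=
        ih U.card (by omega) U rfl hUne hUsum
      have hclog : Nat.clog 2 U.card + 1 ≤ Nat.clog 2 n := by
        have h1 : Nat.clog 2 n = Nat.clog 2 ((n + 2 - 1) / 2) + 1 :=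
          Nat.clog_of_two_le (by norm_num) h2
        have h2' : Nat.clog 2 U.card ≤ Nat.clog 2 ((n + 2 - 1) / 2) :=
          Nat.clog_mono_right 2 (by omega)
        omega
      refine ⟨L + 1, by omega, fun t => Nat.rec S (fun s _ => f' s) t,
        rfl, hfL, ?_, ?_, ?_⟩
      · intro t ht
        cases t with
        | zero => exact hne
        | succ s => exact hfne s (by omega)
      · intro t ht
        cases t with
        | zero =>
          constructor
          · simpa [hf0] using hUS
          · simpa [hf0, hcard] using hUcard
        | succ s => exact hfstep s (by omega)
      · intro t ht
        cases t with
        | zero => exact hsum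
        | succ s => exact hfsum s (by omega)

/-- Correctness of a match: descending the binary match tree halves the
candidate set in each round and, after at most ⌈log₂ p⌉ rounds, identifies a
single partial gradient on whose value the two workers disagree. -/
theorem match_tree_descent
    (A : Type*) [AddCommGroup A] (p : ℕ) (hp : 1 ≤ p)
    (g g' : Fin p → A) (h : ∑ i, g i ≠ ∑ i, g' i) :
    ∃ L : ℕ, L ≤ Nat.clog 2 p ∧
      ∃ S : ℕ → Finset (Fin p),
        S 0 = Finset.univ ∧
        (S L).card = 1 ∧
        (∀ t ≤ L, (S t).Nonempty) ∧
        (∀ t < L, S (t + 1) ⊆ S t ∧ (S (t + 1)).card ≤ ((S t).card + 1) / 2) ∧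
        (∀ t ≤ L, ∑ i ∈ S t, g i ≠ ∑ i ∈ S t, g' i) ∧
        ∃ i : Fin p, S L = {i} ∧ g i ≠ g' i := by
  obtain ⟨L, hL, f, hf0, hfL, hfne, hfstep, hfsum⟩ :=
    match_tree_aux A p g g' p Finset.univ (by simp) (by
      rw [← Finset.card_pos]; simp; omega) h
  obtain ⟨i, hi⟩ := Finset.card_eq_one.mp hfL
  refine ⟨L, hL, f, hf0, hfL, hfne, hfstep, hfsum, i, hi, ?_⟩
  have := hfsum L le_rfl
  rw [hi] at this
  simpa using this
end

section
/- Let s, u be natural numbers with 1 ≤ u ≤ s, let c = ⌊s/u⌋ (natural-number division), and let a be a positive real number. Then the sequence N ↦ ( ((s − c·(u−1)) : ℝ) · a · (clog₂ N : ℝ) ) / logb 2 (binom(N, c)) tends to a · (1 + ((s mod u : ℝ)) / ((s div u : ℝ))) as N → ∞ along the natural numbers. (Limit of the ratio between the achievable communication overhead κ_achieve = (s − c̄(u−1))·a·⌈log₂ N⌉ with a = 1 + ⌈log₂|A|⌉ and c̄ = c = ⌊s/u⌋, and the lower bound κ_bound = log₂ binom(N, c), as the number of samples per group N = p/m grows;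 equation (10) of the paper.) -/
/-!
Since `⌈x⌉ ~ x`, we have `clog₂ N ~ log₂ N`, and since `binom(N, c) ~ N^c / c!`, taking logarithms
gives `log₂ binom(N, c) ~ c · log₂ N`. Hence the ratio `clog₂ N / log₂ binom(N, c)` tends to `1 / c`,
and the prefactor is `s - c (u - 1) = (s mod u) + c`.
-/

open Filter Asymptotics Topology Real

theorem tendsto_logb_natCast_atTop {b : ℕ} (hb : 1 < b) :
    Tendsto (fun n : ℕ => logb b n) atTop atTop :=
  (tendsto_logb_atTop (Nat.one_lt_cast.mpr hb)).comp tendsto_natCast_atTop_atTop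

theorem isEquivalent_clog_logb {b : ℕ} (hb : 1 < b) :
    (fun n : ℕ => (Nat.clog b n : ℝ)) ~[atTop] fun n => logb b n := by
  have hlogb := tendsto_logb_natCast_atTop hb
  rw [isEquivalent_iff_tendsto_one (hlogb.eventually_ne_atTop 0)]
  simpa only [Pi.div_def, Function.comp_def, natCeil_logb_natCast] using
    (tendsto_nat_ceil_div_atTop (R := ℝ)).comp hlogb

theorem isEquivalent_log_choose (c : ℕ) :
    (fun n : ℕ => log (n.choose c)) ~[atTop] fun n => c * log n := by
  rcases eq_or_ne c 0 with rfl | hc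
  · simpa using IsEquivalent.refl
  have hpow : Tendsto (fun n : ℕ => (n : ℝ) ^ c / c.factorial) atTop atTop :=
    ((tendsto_pow_atTop hc).comp tendsto_natCast_atTop_atTop).atTop_div_const
      (by positivity)
  have hlog : Tendsto (fun n : ℕ => (c : ℝ) * log n) atTop atTop :=
    (tendsto_log_atTop.comp tendsto_natCast_atTop_atTop).const_mul_atTop
      (by positivity)
  have hsplit : (fun n : ℕ => log ((n : ℝ) ^ c / c.factorial)) =ᶠ[atTop]
      fun n => c * log n + -log c.factorial := by
    filter_upwards [eventually_ne_atTop 0] with n hn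
    rw [log_div (by positivity) (by positivity), log_pow, sub_eq_add_neg]
  refine ((isEquivalent_choose c).log hpow).trans (IsEquivalent.congr_left ?_ hsplit.symm)
  exact IsEquivalent.refl.add_isLittleO
    (isLittleO_const_left.mpr (Or.inr (tendsto_norm_atTop_atTop.comp hlog)))

theorem isEquivalent_logb_choose (b : ℝ) (c : ℕ) :
    (fun n : ℕ => logb b (n.choose c)) ~[atTop] fun n => c * logb b n := by
  simpa only [Pi.div_def, logb, mul_div_assoc] using
    (isEquivalent_log_choose c).div (IsEquivalent.refl (u := fun _ => log b))

theorem tendsto_clog_div_logb_choose {b c : ℕ} (hb : 1 < b) (hc : c ≠ 0) :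
    Tendsto (fun n : ℕ => (Nat.clog b n : ℝ) / logb b (n.choose c)) atTop
      (𝓝 (c : ℝ)⁻¹) := by
  refine ((isEquivalent_clog_logb hb).div (isEquivalent_logb_choose b c)).symm.tendsto_nhds ?_
  refine tendsto_const_nhds.congr' ?_
  filter_upwards [(tendsto_logb_natCast_atTop hb).eventually_ne_atTop 0] with n hn
  simp only [Pi.div_apply]
  field_simp

theorem Nat.cast_sub_div_mul_sub_one (s u : ℕ) :
    (s : ℝ) - (s / u : ℕ) * ((u : ℝ) - 1) = (s % u : ℕ) + (s / u : ℕ) := by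
  have h : ((u * (s / u) + s % u : ℕ) : ℝ) = s := by rw [Nat.div_add_mod]
  push_cast at h
  linarith

theorem communication_ratio_limit_general
    (s u : ℕ) (hu : 1 ≤ u) (hus : u ≤ s) (a : ℝ) :
    Filter.Tendsto
      (fun N : ℕ =>
        (((s : ℝ) - ((s / u : ℕ) : ℝ) * ((u : ℝ) - 1)) * a * (Nat.clog 2 N : ℝ))
          / Real.logb 2 (N.choose (s / u)))
      Filter.atTop
      (nhds (a * (1 + ((s % u : ℕ) : ℝ) / ((s / u : ℕ) : ℝ)))) := by
  have hc : s / u ≠ 0 := (Nat.div_pos hus hu).ne'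
  have hlim := (tendsto_clog_div_logb_choose one_lt_two hc).const_mul
    ((((s % u : ℕ) : ℝ) + (s / u : ℕ)) * a)
  rw [Nat.cast_ofNat] at hlim
  simp only [Nat.cast_sub_div_mul_sub_one, mul_div_assoc]
  convert hlim using 2
  field_simp
  ring

/-- Limit of the ratio between the achievable communication overhead and the
lower bound as the number of samples per group grows (equation (10) of the
paper). -/
theorem communication_ratio_limit
    (s u : ℕ) (hu : 1 ≤ u) (hus : u ≤ s) (a : ℝ) (ha : 0 < a) :
    Filter.Tendsto
      (fun N : ℕ =>
        (((s : ℝ) - ((s / u : ℕ) : ℝ) * ((u : ℝ) - 1)) * a * (Nat.clog 2 N : ℝ))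
          / Real.logb 2 (N.choose (s / u)))
      Filter.atTop
      (nhds (a * (1 + ((s % u : ℕ) : ℝ) / ((s / u : ℕ) : ℝ)))) :=
  communication_ratio_limit_general s u hu hus a
end

section
/- Let A be a nontrivial additive commutative group, let n, p, s be natural numbers, and let B : Fin p → Finset (Fin n) be a data assignment (B i is the set of workers assigned sample i). Suppose there is an index i₀ with |B i₀| ≤ s. Then there exist a table W : Fin n → Fin p → A, functions g¹, g² : Fin p → A, and sets M¹, M² ⊆ Fin n with |M¹| ≤ s and |M²| ≤ s, such that for each k ∈ {1, 2}: W j i = gᵏ i for every worker j ∉ Mᵏ and every sample i with j ∈ B i; moreover g¹ i = g² i for all i ≠ i₀ and ∑_{i ∈ Fin p} g¹ i ≠ ∑_{i ∈ Fin p} g² i. (Replication lower bound: if some partial gradient is replicated at most s times and is not computed locally by the main node, then two worlds with at most s malicious workers each are indistinguishable from all workers' claims yet have different full gradients; hence any scheme with fewer local computations than samples requires replication factor at least s+1.) -/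
/-- Replication lower bound: if some partial gradient is replicated at most `s`
times and is not computed locally by the main node, then two worlds with at
most `s` malicious workers each are indistinguishable from all workers' claims
yet have different full gradients. -/
theorem replication_lower_bound
    (A : Type*) [AddCommGroup A] [Nontrivial A]
    (n p s : ℕ) (B : Fin p → Finset (Fin n))
    (i₀ : Fin p) (hrep : (B i₀).card ≤ s) :
    ∃ (W : Fin n → Fin p → A) (g₁ g₂ : Fin p → A) (M₁ M₂ : Finset (Fin n)),
      M₁.card ≤ s ∧ M₂.card ≤ s ∧
      (∀ j ∉ M₁, ∀ i, j ∈ B i → W j i = g₁ i) ∧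
      (∀ j ∉ M₂, ∀ i, j ∈ B i → W j i = g₂ i) ∧
      (∀ i, i ≠ i₀ → g₁ i = g₂ i) ∧
      ∑ i, g₁ i ≠ ∑ i, g₂ i := by
  obtain ⟨a, ha⟩ := exists_ne (0 : A)
  refine ⟨fun _ _ => 0, fun _ => 0, fun i => if i = i₀ then a else 0, ∅, B i₀,
    by simp, hrep, by simp, ?_, ?_, ?_⟩
  · intro j hj i hi
    rcases eq_or_ne i i₀ with rfl | h
    · exact absurd hi hj
    · simp [h]
  · intro i h; simp [h]
  · simp [Finset.sum_ite_eq', ha.symm]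
end
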